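/- arXiv:1602.00327 — 2 statements merged into one kernel-verified Lean document; each statement's English description precedes it below -/
import Mathlib

section
/- Let S be a numerical semigroup with multiplicity e. Suppose x = Σ_{i=2}^v a_i n_i ∈ C_k is a maximal representation with all a_i ≥ 1, Σ a_i = k, and |Supp(x)| = q distinct generators. Then for 2 ≤ h < k: if q ≥ h+1 then |C_h| ≥ q, and if q ≤ h then |C_h| ≥ q. -/
/-!
Write the maximal representation of `x ∈ C_k` as a multiset `A` of `k` generators. Every
submultiset `B ≤ A` of size `h ≥ 1` sums to an element of `C_h`: if `B.sum` had order `> h`, or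
`B.sum - e ∈ (h-1)M`, adding back `(A - B).sum` would do the same for `x` at level `k`. So it
suffices that `A`, with `q` distinct values and more than `h` elements, has at least `q`
distinct `h`-sums. Induct by removing the largest element `m`: if `m` occurs once, swapping it
into a heaviest `h`-submultiset of the rest yields a sum larger than all previous ones; when
`|A| = h + 1` the `h`-sums `A.sum - a` are distinct for distinct `a`.
-/

open Set

/-- A numerical semigroup: a cofinite submonoid of ℕ. -/
def IsNumSgp (S : Set ℕ) : Prop :=
  0 ∈ S ∧ (∀ a ∈ S, ∀ b ∈ S, a + b ∈ S) ∧ Sᶜ.Finite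

/-- The maximal ideal `M = S \ {0}`. -/
def MS (S : Set ℕ) : Set ℕ := S \ {0}

/-- The multiplicity `e` of `S`, the smallest nonzero element. -/
noncomputable def mult (S : Set ℕ) : ℕ := sInf (MS S)

/-- `nM S h` is the set of sums of `h` elements of `M = S \ {0}` (with `nM S 0 = {0}`). -/
def nM (S : Set ℕ) : ℕ → Set ℕ
  | 0 => {0}
  | k + 1 => {x | ∃ a ∈ MS S, ∃ b ∈ nM S k, x = a + b}

/-- The order of `s`: the largest `h` with `s ∈ hM`. -/
noncomputable def ordS (S : Set ℕ) (s : ℕ) : ℕ := sSup {h | s ∈ nM S h}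

/-- The Apéry set of `S` with respect to the multiplicity `e`:
elements `s ∈ S` with `s - e ∉ S`. -/
def Ap (S : Set ℕ) : Set ℕ := {s ∈ S | ∀ t ∈ S, t + mult S ≠ s}

/-- Elements of the Apéry set of order `k`. -/
def ApK (S : Set ℕ) (k : ℕ) : Set ℕ := {s ∈ Ap S | ordS S s = k}

/-- `C_k = {s ∈ S : ord s = k and s - e ∉ (k-1)M}`. -/
def CK (S : Set ℕ) (k : ℕ) : Set ℕ :=
  {s ∈ S | ordS S s = k ∧ ∀ t ∈ nM S (k - 1), t + mult S ≠ s}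

/-- `D_k = {s ∈ S : ord s = k-1 and ord (s+e) > k}`. -/
def DK (S : Set ℕ) (k : ℕ) : Set ℕ :=
  {s ∈ S | ordS S s = k - 1 ∧ k < ordS S (s + mult S)}

/-- The Hilbert function of `R = k[[S]]`: `H(0) = 1`, `H(n) = |nM \ (n+1)M|`. -/
noncomputable def HF (S : Set ℕ) (n : ℕ) : ℕ := (nM S n \ nM S (n + 1)).ncard

/-- The set of minimal generators of `S`. -/
def MinGens (S : Set ℕ) : Set ℕ :=
  MS S \ {x | ∃ a ∈ MS S, ∃ b ∈ MS S, x = a + b}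

/-- `a` is a maximal representation of `s`: a finitely supported coefficient
function on the minimal generators with `Σ aⱼ nⱼ = s` and `Σ aⱼ = ord s`. -/
def IsMaxRep (S : Set ℕ) (s : ℕ) (a : ℕ →₀ ℕ) : Prop :=
  (↑a.support : Set ℕ) ⊆ MinGens S ∧
  (a.sum fun n c => c * n) = s ∧
  (a.sum fun _ c => c) = ordS S s

/-- `|Supp(s)|`: the maximal number of distinct minimal generators appearing
in a maximal representation of `s`. -/
noncomputable def SuppCard (S : Set ℕ) (s : ℕ) : ℕ :=
  sSup {q | ∃ a : ℕ →₀ ℕ, IsMaxRep S s a ∧ a.support.card = q}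

/-- The Frobenius number of `S`. -/
noncomputable def Frob (S : Set ℕ) : ℕ := sSup Sᶜ

namespace Multiset

section sumsOfCard

variable {α : Type*} [DecidableEq α] [AddCommMonoid α]

def sumsOfCard (A : Multiset α) (h : ℕ) : Finset α :=
  ((A.powersetCard h).map sum).toFinset

theorem mem_sumsOfCard {A : Multiset α} {h : ℕ} {s : α} :
    s ∈ A.sumsOfCard h ↔ ∃ B ≤ A, card B = h ∧ B.sum = s := by
  simp [sumsOfCard, mem_powersetCard, and_assoc]

theorem sumsOfCard_mono {A A' : Multiset α} (hle : A' ≤ A) (h : ℕ) :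
    A'.sumsOfCard h ⊆ A.sumsOfCard h := fun _ hs =>
  let ⟨B, hB, hBh, hBs⟩ := mem_sumsOfCard.1 hs
  mem_sumsOfCard.2 ⟨B, hB.trans hle, hBh, hBs⟩

end sumsOfCard

variable {α : Type*} [AddCommMonoid α] [LinearOrder α] [IsOrderedCancelAddMonoid α]

theorem card_toFinset_le_card_sumsOfCard_of_card_eq_succ {A : Multiset α} {h : ℕ}
    (hA : card A = h + 1) : A.toFinset.card ≤ (A.sumsOfCard h).card := by
  refine Finset.card_le_card_of_injOn (fun a => (A.erase a).sum) (fun a ha => ?_) ?_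
  · rw [Finset.mem_coe, mem_toFinset] at ha
    exact mem_sumsOfCard.2 ⟨A.erase a, erase_le a A, by simp [card_erase_of_mem ha, hA], rfl⟩
  · intro a ha b hb hab
    rw [Finset.mem_coe, mem_toFinset] at ha hb
    have hab : (A.erase a).sum = (A.erase b).sum := hab
    exact add_right_cancel ((sum_erase ha).trans (hab ▸ sum_erase hb).symm)

-- The witness swaps `m` for an element of a heaviest `h`-submultiset of `A`.
theorem exists_mem_sumsOfCard_cons_gt {A : Multiset α} {m : α} {h : ℕ} (hm : ∀ a ∈ A, a < m)
    (h0 : 0 < h) (hA : h ≤ card A) :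
    ∃ s ∈ (m ::ₘ A).sumsOfCard h, ∀ t ∈ A.sumsOfCard h, t < s := by
  obtain ⟨C, hC, hCmax⟩ := exists_max_image sum
    (card_pos.1 ((card_powersetCard h A).symm ▸ Nat.choose_pos hA))
  rw [mem_powersetCard] at hC
  obtain ⟨c, hc⟩ := card_pos_iff_exists_mem.1 (hC.2 ▸ h0)
  refine ⟨m + (C.erase c).sum, mem_sumsOfCard.2 ⟨m ::ₘ C.erase c, ?_, ?_, by simp⟩, ?_⟩
  · exact cons_le_cons m ((erase_le c C).trans hC.1)
  · rw [card_cons, card_erase_of_mem hc, hC.2]; exact Nat.succ_pred_eq_of_pos h0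
  · intro t ht
    obtain ⟨B, hB, hBh, rfl⟩ := mem_sumsOfCard.1 ht
    calc B.sum ≤ C.sum := hCmax B (mem_powersetCard.2 ⟨hB, hBh⟩)
      _ = c + (C.erase c).sum := (sum_erase hc).symm
      _ < m + (C.erase c).sum := add_lt_add_left (hm c (mem_of_le hC.1 hc)) _

theorem card_toFinset_le_card_sumsOfCard {A : Multiset α} {h : ℕ} (h0 : 0 < h)
    (hA : h < card A) : A.toFinset.card ≤ (A.sumsOfCard h).card := by
  induction A using strongInductionOn with
  | ih A ih =>
  obtain ⟨m, hmA, hmax⟩ := exists_max_image id (card_pos.1 (by omega) : A ≠ 0)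
  set A' := A.erase m
  have hA' : card A = card A' + 1 := (card_erase_add_one hmA).symm
  have hfin : A.toFinset = insert m A'.toFinset := by rw [← toFinset_cons, cons_erase hmA]
  rcases (Nat.lt_succ_iff.1 (hA' ▸ hA)).lt_or_eq with hlt | heq
  · have ih' := ih A' (erase_lt.2 hmA) hlt
    have hsub := sumsOfCard_mono (erase_le m A) h
    by_cases hmA' : m ∈ A'
    · rw [hfin, Finset.insert_eq_of_mem (mem_toFinset.2 hmA')]
      exact ih'.trans (Finset.card_le_card hsub)
    · have hgt : ∀ a ∈ A', a < m := fun a ha =>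
        lt_of_le_of_ne (hmax a (mem_of_mem_erase ha)) (by rintro rfl; exact hmA' ha)
      obtain ⟨s, hs, hsgt⟩ := exists_mem_sumsOfCard_cons_gt hgt h0 hlt.le
      rw [cons_erase hmA] at hs
      have hsA' : s ∉ A'.sumsOfCard h := fun h' => lt_irrefl s (hsgt s h')
      calc A.toFinset.card ≤ A'.toFinset.card + 1 := by
            rw [hfin]; exact Finset.card_insert_le _ _
        _ ≤ (A'.sumsOfCard h).card + 1 := by omega
        _ = (insert s (A'.sumsOfCard h)).card := (Finset.card_insert_of_notMem hsA').symm
        _ ≤ (A.sumsOfCard h).card := Finset.card_le_card (Finset.insert_subset hs hsub)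
  · exact card_toFinset_le_card_sumsOfCard_of_card_eq_succ (by omega)

end Multiset

section NumericalSemigroup

variable {S : Set ℕ}

theorem mult_mem_MS (hS : IsNumSgp S) : mult S ∈ MS S := by
  obtain ⟨r, hrS, hr⟩ := (compl_compl S ▸ hS.2.2.infinite_compl).exists_gt 0
  exact Nat.sInf_mem ⟨r, hrS, hr.ne'⟩

theorem mem_of_Frob_lt (hS : IsNumSgp S) {r : ℕ} (hr : Frob S < r) : r ∈ S := by
  by_contra hrS
  exact hr.not_ge (le_csSup hS.2.2.bddAbove hrS)

theorem nM_add_mem {g h x y : ℕ} (hx : x ∈ nM S g) (hy : y ∈ nM S h) :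
    x + y ∈ nM S (g + h) := by
  induction g generalizing x with
  | zero => simp_all [nM]
  | succ g ih =>
    obtain ⟨a, ha, b, hb, rfl⟩ := hx
    rw [Nat.succ_add]
    exact ⟨a, ha, b + y, ih hb, add_assoc a b y⟩

theorem le_of_mem_nM {h x : ℕ} (hx : x ∈ nM S h) : h ≤ x := by
  induction h generalizing x with
  | zero => exact Nat.zero_le x
  | succ h ih =>
    obtain ⟨a, ha, b, hb, rfl⟩ := hx
    have : a ≠ 0 := ha.2
    have := ih hb
    omega

theorem nM_subset (hS : IsNumSgp S) (h : ℕ) : nM S h ⊆ S := by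
  induction h with
  | zero => rintro x rfl; exact hS.1
  | succ h ih =>
    rintro x ⟨a, ha, b, hb, rfl⟩
    exact hS.2.1 a ha.1 b (ih hb)

theorem sum_mem_nM {A : Multiset ℕ} (hA : ∀ n ∈ A, n ∈ MS S) :
    A.sum ∈ nM S (Multiset.card A) := by
  induction A using Multiset.induction_on with
  | empty => rfl
  | cons n A ih =>
    rw [Multiset.sum_cons, Multiset.card_cons]
    exact ⟨n, hA n (Multiset.mem_cons_self n A), A.sum,
      ih fun m hm => hA m (Multiset.mem_cons_of_mem hm), rfl⟩

theorem le_ordS {s h : ℕ} (hs : s ∈ nM S h) : h ≤ ordS S s :=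
  le_csSup ⟨s, fun _ hj => le_of_mem_nM hj⟩ hs

theorem CK_finite (hS : IsNumSgp S) (h : ℕ) : (CK S h).Finite := by
  refine (Set.finite_Iic (h * mult S + Frob S)).subset fun y ⟨_, hyord, _⟩ => ?_
  by_contra hbig
  rw [Set.mem_Iic, not_le] at hbig
  have hr : y - h * mult S ∈ MS S :=
    ⟨mem_of_Frob_lt hS (by omega), by rw [Set.mem_singleton_iff]; omega⟩
  have hy : y ∈ nM S (h + 1) := by
    -- `y = (y - h e) + e + ⋯ + e`
    have := sum_mem_nM (A := (y - h * mult S) ::ₘ Multiset.replicate h (mult S)) fun n hn => by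
      rcases Multiset.mem_cons.1 hn with rfl | hn
      · exact hr
      · exact Multiset.eq_of_mem_replicate hn ▸ mult_mem_MS hS
    simp only [Multiset.sum_cons, Multiset.sum_replicate, smul_eq_mul, Multiset.card_cons,
      Multiset.card_replicate] at this
    rwa [Nat.sub_add_cancel (by omega)] at this
  have := le_ordS hy
  omega

theorem sum_mem_CK_of_le (hS : IsNumSgp S) {A B : Multiset ℕ} (hA : ∀ n ∈ A, n ∈ MS S)
    (hx : A.sum ∈ CK S (Multiset.card A)) (hBA : B ≤ A) (hB : B ≠ 0) :
    B.sum ∈ CK S (Multiset.card B) := by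
  obtain ⟨-, hxord, hxC⟩ := hx
  have hh : 0 < Multiset.card B := Multiset.card_pos.2 hB
  have hhk : Multiset.card B ≤ Multiset.card A := Multiset.card_le_card hBA
  have hsplit : B.sum + (A - B).sum = A.sum := by
    rw [← Multiset.sum_add, add_tsub_cancel_of_le hBA]
  have hy := sum_mem_nM fun n hn => hA n (Multiset.mem_of_le hBA hn)
  have hz := sum_mem_nM fun n hn => hA n (Multiset.mem_of_le (Multiset.sub_le_self A B) hn)
  rw [Multiset.card_sub hBA] at hz
  refine ⟨nM_subset hS _ hy, le_antisymm (csSup_le ⟨_, hy⟩ fun j hj => ?_) (le_ordS hy), ?_⟩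
  · have := hxord ▸ le_ordS (hsplit ▸ nM_add_mem hj hz)
    omega
  · intro t ht hte
    have htz := nM_add_mem ht hz
    rw [show Multiset.card B - 1 + (Multiset.card A - Multiset.card B) = Multiset.card A - 1 by
      omega] at htz
    exact hxC _ htz (by omega)

end NumericalSemigroup

theorem stmt4_general (S : Set ℕ) (hS : IsNumSgp S) (k q : ℕ) (x : ℕ) (hx : x ∈ CK S k)
    (a : ℕ →₀ ℕ) (ha : IsMaxRep S x a) (hq : a.support.card = q)
    (h : ℕ) (h2 : 2 ≤ h) (hhk : h < k) :
    (h + 1 ≤ q → q ≤ (CK S h).ncard) ∧ (q ≤ h → q ≤ (CK S h).ncard) := by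
  obtain ⟨hgens, hweight, hord⟩ := ha
  set A := Finsupp.toMultiset a
  have hAgens : ∀ n ∈ A, n ∈ MS S := fun n hn => (hgens ((Finsupp.mem_toMultiset a n).1 hn)).1
  have hAsum : A.sum = x := by simpa [A, Finsupp.sum_toMultiset, mul_comm] using hweight
  have hAcard : Multiset.card A = k := by rw [Finsupp.card_toMultiset]; exact hord.trans hx.2.1
  have hsums : ↑(A.sumsOfCard h) ⊆ CK S h := fun s hs => by
    obtain ⟨B, hBA, rfl, rfl⟩ := Multiset.mem_sumsOfCard.1 hs
    exact sum_mem_CK_of_le hS hAgens (hAsum ▸ hAcard ▸ hx) hBA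
      (Multiset.card_pos.1 (by omega))
  have key : q ≤ (CK S h).ncard := calc
    q = A.toFinset.card := by rw [Finsupp.toFinset_toMultiset, hq]
    _ ≤ (A.sumsOfCard h).card := A.card_toFinset_le_card_sumsOfCard (by omega) (by omega)
    _ ≤ (CK S h).ncard := by
      rw [← Set.ncard_coe_finset]; exact Set.ncard_le_ncard hsums (CK_finite hS h)
  exact ⟨fun _ => key, fun _ => key⟩

theorem stmt4 (S : Set ℕ) (hS : IsNumSgp S) (k q : ℕ) (x : ℕ) (hx : x ∈ CK S k)
    (a : ℕ →₀ ℕ) (ha : IsMaxRep S x a) (hae : mult S ∉ a.support)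
    (hsum : (a.sum fun _ c => c) = k) (hq : a.support.card = q)
    (h : ℕ) (h2 : 2 ≤ h) (hhk : h < k) :
    (h + 1 ≤ q → q ≤ (CK S h).ncard) ∧ (q ≤ h → q ≤ (CK S h).ncard) :=
  stmt4_general S hS k q x hx a ha hq h h2 hhk
end

section
/- Let S be a numerical semigroup with |Ap_2| = 3 and |C_3| ≥ 4. Then there exist two distinct minimal generators n_i, n_j of S, both different from the multiplicity e, such that C_2 = Ap_2 = {2n_i, n_i + n_j, 2n_j} and C_3 = {3n_i, 2n_i + n_j, n_i + 2n_j, 3n_j}. -/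
open Set

/-!
If `s ∈ C₃` and `s = p + q + r` with `p, q, r ∈ M`, then `p + q ∈ Ap₂`: otherwise either
`s - e ∈ 2M` or `ord s ≥ 4`; likewise `p` is a minimal generator different from `e`. What remains
is combinatorics of three-fold sums whose pairwise partial sums lie in the three-element set
`A = Ap₂`. If some `s ∈ C₃` has three distinct summands, `A` consists of their pairwise sums and
`|C₃| ≤ 3`. Otherwise every element of `C₃` is `x + x + z`; a single such `x` would give
`C₃ ⊆ x + A`, so there are two, `u ≠ v`, and exchanging summands between decompositions forces
`A = {2u, u + v, 2v}` and `C₃ ⊆ {3u, 2u + v, u + 2v, 3v}`.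
-/

lemma Set.ncard_le_three {α : Type*} (a b c : α) : ({a, b, c} : Set α).ncard ≤ 3 := by
  classical
  simpa using (Set.ncard_coe_finset ({a, b, c} : Finset α)).le.trans Finset.card_le_three

lemma Set.ncard_le_four {α : Type*} (a b c d : α) : ({a, b, c, d} : Set α).ncard ≤ 4 := by
  classical
  simpa using (Set.ncard_coe_finset ({a, b, c, d} : Finset α)).le.trans Finset.card_le_four

lemma Set.exists_subset_insert_insert_of_ncard_eq_three {α : Type*} {A : Set α}
    (hA : A.ncard = 3) {x y : α} (hx : x ∈ A) (hy : y ∈ A) (hxy : x ≠ y) :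
    ∃ z, A ⊆ {x, y, z} := by
  have hxyA : ({x, y} : Set α) ⊆ A := Set.pair_subset hx hy
  obtain ⟨z, hz⟩ : ∃ z, A \ {x, y} = {z} := by
    rw [← Set.ncard_eq_one, Set.ncard_sdiff hxyA, hA, Set.ncard_pair hxy]
  refine ⟨z, fun t ht => ?_⟩
  by_cases htxy : t ∈ ({x, y} : Set α)
  · rcases htxy with rfl | rfl <;> simp
  · have : t ∈ A \ {x, y} := ⟨ht, htxy⟩
    rw [hz] at this
    simp [Set.mem_singleton_iff.mp this]

/-- The situation of `(MS S, Ap₂, C₃)` with the semigroup forgotten. -/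
structure TripleSumSystem (M A C : Set ℕ) : Prop where
  exists_eq_add : ∀ s ∈ C, ∃ p ∈ M, ∃ q ∈ M, ∃ r ∈ M, s = p + q + r
  add_mem : ∀ s ∈ C, ∀ p ∈ M, ∀ q ∈ M, ∀ r ∈ M, s = p + q + r → p + q ∈ A

namespace TripleSumSystem

variable {M A C : Set ℕ}

lemma exists_double_or_distinct (h : TripleSumSystem M A C) {s : ℕ} (hs : s ∈ C) :
    (∃ x ∈ M, ∃ z ∈ M, s = x + x + z) ∨
      ∃ p ∈ M, ∃ q ∈ M, ∃ r ∈ M, s = p + q + r ∧ p ≠ q ∧ p ≠ r ∧ q ≠ r := by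
  obtain ⟨p, hp, q, hq, r, hr, rfl⟩ := h.exists_eq_add s hs
  by_cases hpq : p = q
  · exact .inl ⟨p, hp, r, hr, by rw [hpq]⟩
  by_cases hpr : p = r
  · exact .inl ⟨p, hp, q, hq, by omega⟩
  by_cases hqr : q = r
  · exact .inl ⟨q, hq, p, hp, by omega⟩
  exact .inr ⟨p, hp, q, hq, r, hr, rfl, hpq, hpr, hqr⟩

lemma ncard_le_of_forall_eq_add (h : TripleSumSystem M A C) (hA : A.Finite) {x : ℕ} (hx : x ∈ M)
    (hC : ∀ s ∈ C, ∃ q ∈ M, ∃ r ∈ M, s = x + q + r) : C.ncard ≤ A.ncard := by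
  calc C.ncard ≤ ((x + ·) '' A).ncard := Set.ncard_le_ncard ?_ (hA.image _)
    _ ≤ A.ncard := Set.ncard_image_le hA
  intro s hs
  obtain ⟨q, hq, r, hr, rfl⟩ := hC s hs
  exact ⟨q + r, h.add_mem _ hs q hq r hr x hx (by ring), by ring⟩

lemma ncard_le_three_of_distinct (h : TripleSumSystem M A C) (hA : A.ncard = 3)
    {s₀ a b c : ℕ} (hs₀ : s₀ ∈ C) (ha : a ∈ M) (hb : b ∈ M) (hc : c ∈ M)
    (hs₀_eq : s₀ = a + b + c) (hab : a ≠ b) (hac : a ≠ c) (hbc : b ≠ c) : C.ncard ≤ 3 := by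
  have hA_eq : A = {a + b, a + c, b + c} := by
    refine (Set.eq_of_subset_of_ncard_le ?_ ?_ (Set.finite_of_ncard_pos (by omega))).symm
    · simp only [Set.insert_subset_iff, Set.singleton_subset_iff]
      exact ⟨h.add_mem _ hs₀ a ha b hb c hc hs₀_eq, h.add_mem _ hs₀ a ha c hc b hb (by omega),
        h.add_mem _ hs₀ b hb c hc a ha (by omega)⟩
    · rw [hA, Set.ncard_eq_three.mpr ⟨_, _, _, by omega, by omega, by omega, rfl⟩]
  have mem : ∀ {y}, y ∈ A → y = a + b ∨ y = a + c ∨ y = b + c := by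
    intro y hy; simpa [hA_eq] using hy
  -- `x + x` is a pairwise sum of `a, b, c`, so `s₀ = x + x + y` with `y` the remaining summand.
  have of_double : ∀ s ∈ C, ∀ x ∈ M, ∀ z ∈ M, s = x + x + z → s₀ = 3 * x := by
    intro s hs x hx z hz hs_eq
    rcases mem (h.add_mem s hs x hx x hx z hz hs_eq) with hxx | hxx | hxx
    · have := mem (h.add_mem s₀ hs₀ x hx c hc x hx (by omega)); omega
    · have := mem (h.add_mem s₀ hs₀ x hx b hb x hx (by omega)); omega
    · have := mem (h.add_mem s₀ hs₀ x hx a ha x hx (by omega)); omega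
  have of_distinct : ∀ s ∈ C, ∀ p ∈ M, ∀ q ∈ M, ∀ r ∈ M, s = p + q + r →
      p ≠ q → p ≠ r → q ≠ r → s = s₀ := by
    intro s hs p hp q hq r hr hs_eq hpq hpr hqr
    have := mem (h.add_mem s hs p hp q hq r hr hs_eq)
    have := mem (h.add_mem s hs p hp r hr q hq (by omega))
    have := mem (h.add_mem s hs q hq r hr p hp (by omega))
    omega
  by_cases hx : ∃ x ∈ M, s₀ = 3 * x
  · obtain ⟨x, hx, hs₀x⟩ := hx
    refine hA ▸ h.ncard_le_of_forall_eq_add (Set.finite_of_ncard_pos (by omega)) hx ?_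
    intro s hs
    rcases h.exists_double_or_distinct hs with
      ⟨y, hy, z, hz, hs_eq⟩ | ⟨p, hp, q, hq, r, hr, hs_eq, hpq, hpr, hqr⟩
    · have := of_double s hs y hy z hz hs_eq
      exact ⟨y, hy, z, hz, by omega⟩
    · have := of_distinct s hs p hp q hq r hr hs_eq hpq hpr hqr
      exact ⟨x, hx, x, hx, by omega⟩
  · push Not at hx
    refine (Set.ncard_le_ncard (t := {s₀}) ?_).trans (by simp)
    intro s hs
    rcases h.exists_double_or_distinct hs with
      ⟨y, hy, z, hz, hs_eq⟩ | ⟨p, hp, q, hq, r, hr, hs_eq, hpq, hpr, hqr⟩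
    · exact absurd (of_double s hs y hy z hz hs_eq) (hx y hy)
    · exact of_distinct s hs p hp q hq r hr hs_eq hpq hpr hqr

lemma ncard_le_three_of_subset_doubles (h : TripleSumSystem M A C)
    (hC : ∀ s ∈ C, ∃ x ∈ M, ∃ z ∈ M, s = x + x + z) {u v w : ℕ} (hu : u ∈ M) (hv : v ∈ M)
    (hw : w ∈ M) (hA : A ⊆ {2 * u, 2 * v, 2 * w}) : C.ncard ≤ 3 := by
  have mem : ∀ {a}, a ∈ A → a = 2 * u ∨ a = 2 * v ∨ a = 2 * w := fun ha => by simpa using hA ha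
  have half : ∀ {a}, a ∈ A → ∃ y ∈ M, a = y + y := by
    intro a ha
    rcases mem ha with rfl | rfl | rfl
    exacts [⟨u, hu, by ring⟩, ⟨v, hv, by ring⟩, ⟨w, hw, by ring⟩]
  refine (Set.ncard_le_ncard (t := {3 * u, 3 * v, 3 * w}) ?_).trans (Set.ncard_le_three _ _ _)
  intro s hs
  obtain ⟨x, hx, z, hz, hs_eq⟩ := hC s hs
  obtain ⟨y, hy, hxz⟩ := half (h.add_mem s hs x hx z hz x hx (by omega))
  obtain ⟨t, ht, hxy⟩ := half (h.add_mem s hs x hx y hy y hy (by omega))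
  have := mem (h.add_mem s hs x hx x hx z hz hs_eq)
  have := mem (h.add_mem s hs x hx z hz x hx (by omega))
  have := mem (h.add_mem s hs x hx y hy y hy (by omega))
  have := mem (h.add_mem s hs t ht y hy t ht (by omega))
  -- If `y ≠ x`, then `t` lies strictly between `x` and `y`, and `t + y = 2t'` would need a
  -- fourth value `t'` strictly between `t` and `y`.
  simp only [Set.mem_insert_iff, Set.mem_singleton_iff]
  omega

lemma ncard_le_three_of_add_notMem (h : TripleSumSystem M A C) {u v c : ℕ} (hu : u ∈ M)
    (hv : v ∈ M) (hA : A ⊆ {2 * u, 2 * v, c})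
    (hC : ∀ s ∈ C, ∃ x ∈ M, ∃ z ∈ M, s = x + x + z ∧ (x = u ∨ x = v)) (huv : u + v ∉ A) :
    C.ncard ≤ 3 := by
  have shape : ∀ s ∈ C, s = 3 * u ∨ s = 3 * v ∨ (∃ z ∈ M, s = u + c ∧ c = u + z) ∨
      (∃ z ∈ M, s = v + c ∧ c = v + z) := by
    intro s hs
    obtain ⟨x, hx, z, hz, hs_eq, hxuv⟩ := hC s hs
    have hxz : x + z = 2 * u ∨ x + z = 2 * v ∨ x + z = c := by
      simpa using hA (h.add_mem s hs x hx z hz x hx (by omega))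
    rcases hxuv with rfl | rfl <;> rcases hxz with hxz | hxz | hxz
    · omega
    · exact absurd (h.add_mem s hs x hx v hv v hv (by omega)) huv
    · exact .inr (.inr (.inl ⟨z, hz, by omega, hxz.symm⟩))
    · exact absurd (h.add_mem s hs u hu x hx u hu (by omega)) huv
    · omega
    · exact .inr (.inr (.inr ⟨z, hz, by omega, hxz.symm⟩))
  by_cases hcu : ∃ z ∈ M, c = u + z
  · obtain ⟨t, ht, hct⟩ := hcu
    refine (Set.ncard_le_ncard (t := {3 * u, 3 * v, u + c}) ?_).trans (Set.ncard_le_three _ _ _)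
    intro s hs
    simp only [Set.mem_insert_iff, Set.mem_singleton_iff]
    rcases shape s hs with hs_eq | hs_eq | ⟨z, -, hs_eq, -⟩ | ⟨z, -, hs_eq, -⟩
    · exact .inl hs_eq
    · exact .inr (.inl hs_eq)
    · exact .inr (.inr hs_eq)
    · exact absurd (h.add_mem s hs u hu v hv t ht (by omega)) huv
  · refine (Set.ncard_le_ncard (t := {3 * u, 3 * v, v + c}) ?_).trans (Set.ncard_le_three _ _ _)
    intro s hs
    simp only [Set.mem_insert_iff, Set.mem_singleton_iff]
    rcases shape s hs with hs_eq | hs_eq | ⟨z, hz, -, hcz⟩ | ⟨z, -, hs_eq, -⟩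
    · exact .inl hs_eq
    · exact .inr (.inl hs_eq)
    · exact absurd ⟨z, hz, hcz⟩ hcu
    · exact .inr (.inr hs_eq)

lemma exists_eq_of_forall_double (h : TripleSumSystem M A C) (hA : A.ncard = 3)
    (hC : 4 ≤ C.ncard) (hdouble : ∀ s ∈ C, ∃ x ∈ M, ∃ z ∈ M, s = x + x + z) :
    ∃ u ∈ M, ∃ v ∈ M, u ≠ v ∧ A = {2 * u, u + v, 2 * v} ∧
      C = {3 * u, 2 * u + v, u + 2 * v, 3 * v} := by
  have hA_fin : A.Finite := Set.finite_of_ncard_pos (by omega)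
  obtain ⟨s₁, hs₁⟩ : C.Nonempty := Set.nonempty_of_ncard_ne_zero (by omega)
  obtain ⟨u, hu, zu, hzu, hs₁_eq⟩ := hdouble s₁ hs₁
  obtain ⟨s₂, hs₂, v, hv, zv, hzv, hs₂_eq, hvu⟩ :
      ∃ s ∈ C, ∃ v ∈ M, ∃ z ∈ M, s = v + v + z ∧ v ≠ u := by
    by_contra! hu_common
    have := h.ncard_le_of_forall_eq_add hA_fin hu fun s hs => by
      obtain ⟨x, hx, z, hz, hs_eq⟩ := hdouble s hs
      exact ⟨u, hu, z, hz, by rw [hs_eq, hu_common s hs x hx z hz hs_eq]⟩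
    omega
  have h2u : 2 * u ∈ A := two_mul u ▸ h.add_mem s₁ hs₁ u hu u hu zu hzu hs₁_eq
  have h2v : 2 * v ∈ A := two_mul v ▸ h.add_mem s₂ hs₂ v hv v hv zv hzv hs₂_eq
  obtain ⟨c, hAc⟩ := Set.exists_subset_insert_insert_of_ncard_eq_three hA h2u h2v (by omega)
  have hdouble' : ∀ s ∈ C, ∃ x ∈ M, ∃ z ∈ M, s = x + x + z ∧ (x = u ∨ x = v) := by
    intro s hs
    obtain ⟨x, hx, z, hz, hs_eq⟩ := hdouble s hs
    refine ⟨x, hx, z, hz, hs_eq, ?_⟩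
    by_contra! hxuv
    have hxc : 2 * x = c := by
      have := hAc (h.add_mem s hs x hx x hx z hz hs_eq)
      simp only [Set.mem_insert_iff, Set.mem_singleton_iff] at this
      omega
    have := h.ncard_le_three_of_subset_doubles hdouble hu hv hx (hxc ▸ hAc)
    omega
  have huv : u + v ∈ A := by
    by_contra huv
    have := h.ncard_le_three_of_add_notMem hu hv hAc hdouble' huv
    omega
  have hA_eq : A = {2 * u, u + v, 2 * v} := by
    refine (Set.eq_of_subset_of_ncard_le ?_ ?_ hA_fin).symm
    · simp only [Set.insert_subset_iff, Set.singleton_subset_iff]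
      exact ⟨h2u, huv, h2v⟩
    · rw [hA, Set.ncard_eq_three.mpr ⟨_, _, _, by omega, by omega, by omega, rfl⟩]
  refine ⟨u, hu, v, hv, hvu.symm, hA_eq, Set.eq_of_subset_of_ncard_le ?_
    ((Set.ncard_le_four _ _ _ _).trans hC) (Set.toFinite _)⟩
  intro s hs
  obtain ⟨x, hx, z, hz, hs_eq, hxuv⟩ := hdouble' s hs
  have hxz : x + z ∈ A := h.add_mem s hs x hx z hz x hx (by omega)
  rw [hA_eq] at hxz
  simp only [Set.mem_insert_iff, Set.mem_singleton_iff] at hxz ⊢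
  omega

theorem exists_eq_of_ncard (h : TripleSumSystem M A C) (hA : A.ncard = 3)
    (hC : 4 ≤ C.ncard) :
    ∃ u ∈ M, ∃ v ∈ M, u ≠ v ∧ A = {2 * u, u + v, 2 * v} ∧
      C = {3 * u, 2 * u + v, u + 2 * v, 3 * v} := by
  refine h.exists_eq_of_forall_double hA hC fun s hs => ?_
  refine (h.exists_double_or_distinct hs).resolve_right ?_
  rintro ⟨p, hp, q, hq, r, hr, hs_eq, hpq, hpr, hqr⟩
  have := h.ncard_le_three_of_distinct hA hs hp hq hr hs_eq hpq hpr hqr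
  omega

end TripleSumSystem

section NumericalSemigroup

variable {S : Set ℕ}

lemma mult_le_of_mem_MS {a : ℕ} (ha : a ∈ MS S) : mult S ≤ a := Nat.sInf_le ha

lemma nM_one : nM S 1 = MS S := by
  ext x
  constructor
  · rintro ⟨a, ha, b, rfl, rfl⟩
    simpa using ha
  · intro hx
    exact ⟨x, hx, 0, rfl, rfl⟩

lemma add_mem_nM {h k x y : ℕ} (hx : x ∈ nM S h) (hy : y ∈ nM S k) :
    x + y ∈ nM S (h + k) := by
  induction h generalizing x with
  | zero =>
    obtain rfl : x = 0 := hx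
    simpa using hy
  | succ h ih =>
    obtain ⟨a, ha, b, hb, rfl⟩ := hx
    rw [Nat.add_right_comm]
    exact ⟨a, ha, b + y, ih hb, by ring⟩

lemma mul_mult_le_of_mem_nM {k x : ℕ} (hx : x ∈ nM S k) : k * mult S ≤ x := by
  induction k generalizing x with
  | zero => simp
  | succ k ih =>
    obtain ⟨a, ha, b, hb, rfl⟩ := hx
    have := mult_le_of_mem_MS ha
    have := ih hb
    rw [add_mul, one_mul]
    omega

lemma ne_mult_of_mem_CK_three {s p q r : ℕ} (hs : s ∈ CK S 3) (hq : q ∈ MS S) (hr : r ∈ MS S)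
    (hs_eq : s = p + q + r) : p ≠ mult S := by
  rintro rfl
  exact hs.2.2 (q + r) (add_mem_nM (nM_one ▸ hq) (nM_one ▸ hr)) (by omega)

end NumericalSemigroup

namespace IsNumSgp

variable {S : Set ℕ}

lemma mult_mem_MS (hS : IsNumSgp S) : mult S ∈ MS S := by
  have hS_inf : S.Infinite := by simpa using hS.2.2.infinite_compl
  exact Nat.sInf_mem (hS_inf.sdiff (Set.finite_singleton 0)).nonempty

lemma mult_pos (hS : IsNumSgp S) : 0 < mult S :=
  Nat.pos_of_ne_zero hS.mult_mem_MS.2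

lemma nM_subset (hS : IsNumSgp S) (k : ℕ) : nM S k ⊆ S := by
  induction k with
  | zero =>
    rintro x rfl
    exact hS.1
  | succ k ih =>
    rintro x ⟨a, ha, b, hb, rfl⟩
    exact hS.2.1 a ha.1 b (ih hb)

lemma bddAbove_orders (hS : IsNumSgp S) (s : ℕ) : BddAbove {k | s ∈ nM S k} :=
  ⟨s, fun k hk => (Nat.le_mul_of_pos_right k hS.mult_pos).trans (mul_mult_le_of_mem_nM hk)⟩

lemma le_ordS (hS : IsNumSgp S) {s k : ℕ} (hs : s ∈ nM S k) : k ≤ ordS S s :=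
  le_csSup (hS.bddAbove_orders s) hs

lemma mem_nM_ordS (hS : IsNumSgp S) {s k : ℕ} (hs : s ∈ nM S k) : s ∈ nM S (ordS S s) :=
  Nat.sSup_mem ⟨k, hs⟩ (hS.bddAbove_orders s)

lemma mem_nM_of_ordS_eq (hS : IsNumSgp S) {s k : ℕ} (hk : k ≠ 0) (hs : ordS S s = k) :
    s ∈ nM S k := by
  obtain ⟨j, hj⟩ : {k | s ∈ nM S k}.Nonempty := by
    by_contra hne
    rw [Set.not_nonempty_iff_eq_empty] at hne
    simp [ordS, hne] at hs
    omega
  exact hs ▸ hS.mem_nM_ordS hj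

lemma ordS_add_lt (hS : IsNumSgp S) {x r k : ℕ} (hx : x ∈ nM S k) (hr : r ∈ MS S) :
    ordS S x < ordS S (x + r) :=
  hS.le_ordS (add_comm r x ▸ ⟨r, hr, x, hS.mem_nM_ordS hx, rfl⟩)

lemma ordS_mult_le_one (hS : IsNumSgp S) : ordS S (mult S) ≤ 1 := by
  have he : mult S ∈ nM S 1 := nM_one ▸ hS.mult_mem_MS
  have := mul_mult_le_of_mem_nM (hS.mem_nM_ordS he)
  have := hS.mult_pos
  nlinarith

lemma CK_two_eq_ApK_two (hS : IsNumSgp S) : CK S 2 = ApK S 2 := by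
  ext s
  constructor
  · rintro ⟨hsS, hord, hC⟩
    refine ⟨⟨hsS, fun t ht heq => ?_⟩, hord⟩
    rcases Nat.eq_zero_or_pos t with rfl | ht_pos
    · have := hS.ordS_mult_le_one
      rw [zero_add] at heq
      subst heq
      omega
    · exact hC t (nM_one ▸ ⟨ht, ht_pos.ne'⟩) heq
  · rintro ⟨⟨hsS, hAp⟩, hord⟩
    exact ⟨hsS, hord, fun t ht => hAp t (hS.nM_subset 1 ht)⟩

lemma add_mem_ApK_two_of_mem_CK_three (hS : IsNumSgp S) {s p q r : ℕ} (hs : s ∈ CK S 3)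
    (hp : p ∈ MS S) (hq : q ∈ MS S) (hr : r ∈ MS S) (hs_eq : s = p + q + r) :
    p + q ∈ ApK S 2 := by
  obtain ⟨-, hord, hC⟩ := hs
  subst hs_eq
  have hpq : p + q ∈ nM S 2 := add_mem_nM (nM_one ▸ hp) (nM_one ▸ hq)
  have := hS.le_ordS hpq
  have := hS.ordS_add_lt hpq hr
  refine ⟨⟨hS.nM_subset 2 hpq, fun t ht heq => ?_⟩, by omega⟩
  rcases Nat.eq_zero_or_pos t with rfl | ht_pos
  · have := mult_le_of_mem_MS hp
    have := mult_le_of_mem_MS hq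
    have := hS.mult_pos
    omega
  · exact hC (t + r) (add_mem_nM (nM_one ▸ ⟨ht, ht_pos.ne'⟩) (nM_one ▸ hr)) (by omega)

lemma tripleSumSystem (hS : IsNumSgp S) : TripleSumSystem (MS S) (ApK S 2) (CK S 3) where
  exists_eq_add s hs := by
    obtain ⟨p, hp, b, ⟨q, hq, r, hr, rfl⟩, rfl⟩ := hS.mem_nM_of_ordS_eq three_ne_zero hs.2.1
    exact ⟨p, hp, q, hq, r, nM_one ▸ hr, by ring⟩
  add_mem _ hs _ hp _ hq _ hr hs_eq := hS.add_mem_ApK_two_of_mem_CK_three hs hp hq hr hs_eq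

lemma mem_MinGens_of_mem_CK_three (hS : IsNumSgp S) {s p q r : ℕ} (hs : s ∈ CK S 3)
    (hp : p ∈ MS S) (hq : q ∈ MS S) (hr : r ∈ MS S) (hs_eq : s = p + q + r) :
    p ∈ MinGens S := by
  refine ⟨hp, ?_⟩
  rintro ⟨a, ha, b, hb, rfl⟩
  have h4 : s ∈ nM S 4 := hs_eq ▸ add_mem_nM (add_mem_nM (add_mem_nM (nM_one ▸ ha)
    (nM_one ▸ hb)) (nM_one ▸ hq)) (nM_one ▸ hr)
  have := hS.le_ordS h4
  have := hs.2.1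
  omega

end IsNumSgp

theorem stmt13 (S : Set ℕ) (hS : IsNumSgp S) (h2 : (ApK S 2).ncard = 3)
    (h3 : 4 ≤ (CK S 3).ncard) :
    ∃ ni ∈ MinGens S, ∃ nj ∈ MinGens S, ni ≠ nj ∧ ni ≠ mult S ∧ nj ≠ mult S ∧
      CK S 2 = ApK S 2 ∧
      CK S 2 = {2 * ni, ni + nj, 2 * nj} ∧
      CK S 3 = {3 * ni, 2 * ni + nj, ni + 2 * nj, 3 * nj} := by
  obtain ⟨u, hu, v, hv, huv, hA, hC⟩ := hS.tripleSumSystem.exists_eq_of_ncard h2 h3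
  have h3u : 3 * u ∈ CK S 3 := by simp [hC]
  have h3v : 3 * v ∈ CK S 3 := by simp [hC]
  have hu3 : 3 * u = u + u + u := by ring
  have hv3 : 3 * v = v + v + v := by ring
  exact ⟨u, hS.mem_MinGens_of_mem_CK_three h3u hu hu hu hu3,
    v, hS.mem_MinGens_of_mem_CK_three h3v hv hv hv hv3, huv,
    ne_mult_of_mem_CK_three h3u hu hu hu3, ne_mult_of_mem_CK_three h3v hv hv hv3,
    hS.CK_two_eq_ApK_two, hS.CK_two_eq_ApK_two.trans hA, hC⟩
end
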